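/- Let $G$ be an abelian group and $\xi : G \to \mathbb{R}$ a homomorphism. Every element of the set $S_\xi = \{ \lambda \in \mathbb{Z}G \mid \lambda = 1 + \mu \text{ with } \xi(g) \le -1 \text{ for all } g \in \mathrm{supp}(\mu) \}$ is a non-zero-divisor in the group ring $\mathbb{Z}G$. Consequently the canonical map from $\mathbb{Z}G$ to the localization $\Lambda_{(\xi)} = S_\xi^{-1}\,\mathbb{Z}G$ is injective. -/

import Mathlib

lemma aux8 {G : Type*} [AddCommGroup G] (ξ : G →+ ℝ)
    (μ : AddMonoidAlgebra ℤ G) (hμ : ∀ g : G, μ.coeff g ≠ 0 → ξ g ≤ -1) :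
    (1 + μ) ∈ nonZeroDivisors (AddMonoidAlgebra ℤ G) := by
  classical
  rw [mem_nonZeroDivisors_iff_right]
  intro x hx
  by_contra hx0
  obtain ⟨g, hg, hmax⟩ := x.coeff.support.exists_max_image ξ (Finsupp.support_nonempty_iff.mpr (mt AddMonoidAlgebra.coeff_eq_zero.mp hx0))
  have h2 : (x * μ).coeff g = 0 := by
    rw [AddMonoidAlgebra.coeff_mul, Finsupp.sum]
    refine Finset.sum_eq_zero fun a ha => ?_
    rw [Finsupp.sum]
    refine Finset.sum_eq_zero fun b hb => ?_
    rw [if_neg]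
    intro hab
    have h1 : ξ a ≤ ξ g := hmax a ha
    have h3 : ξ b ≤ -1 := hμ b (Finsupp.mem_support_iff.mp hb)
    have : ξ g = ξ a + ξ b := by rw [← hab, map_add]
    linarith
  have h4 : (x * (1 + μ)).coeff g = x.coeff g := by
    rw [mul_add, mul_one, AddMonoidAlgebra.coeff_add, Finsupp.add_apply, h2, add_zero]
  rw [hx, AddMonoidAlgebra.coeff_zero, Finsupp.coe_zero, Pi.zero_apply] at h4
  exact (Finsupp.mem_support_iff.mp hg) h4.symm

/-- Every element of `S_ξ = {1 + μ : ξ ≤ -1 on supp μ} ⊆ ℤG` is a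
non-zero-divisor of the group ring `ℤG`, and hence the canonical map from
`ℤG` to the localization `Λ_{(ξ)} = S_ξ⁻¹ ℤG` is injective. -/
theorem stmt8 {G : Type*} [AddCommGroup G] (ξ : G →+ ℝ)
    (lam μ : AddMonoidAlgebra ℤ G)
    (hlam : lam = 1 + μ) (hμ : ∀ g : G, μ.coeff g ≠ 0 → ξ g ≤ -1) :
    lam ∈ nonZeroDivisors (AddMonoidAlgebra ℤ G) ∧
    ∀ S : Submonoid (AddMonoidAlgebra ℤ G),
      (∀ p : AddMonoidAlgebra ℤ G, p ∈ S ↔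
        ∃ ν : AddMonoidAlgebra ℤ G, p = 1 + ν ∧ ∀ g : G, ν.coeff g ≠ 0 → ξ g ≤ -1) →
      Function.Injective (algebraMap (AddMonoidAlgebra ℤ G) (Localization S)) := by
  constructor
  · rw [hlam]; exact aux8 ξ μ hμ
  · intro S hS
    have hle : S ≤ nonZeroDivisors (AddMonoidAlgebra ℤ G) := by
      intro p hp
      obtain ⟨ν, hpν, hν⟩ := (hS p).mp hp
      rw [hpν]
      exact aux8 ξ ν hν
    exact IsLocalization.injective (Localization S) hle
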